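/- Let Γ be an additive subgroup of 𝔽^t, b: 𝔽^d × 𝔽^t → 𝔽^k bilinear, (G,ψ) a Γ-gain graph, and ψ' equivalent to ψ via switchings. Then dim_𝔽 span{L_{e,ψ} : e ∈ E} = dim_𝔽 span{L_{e,ψ'} : e ∈ E}, where L_{e,ψ} ⊆ (𝔽^d)^V ⊕ 𝔽^k is defined by x(i)+x(j)=0, b(x(i),ψ(e))+x(∗)=0, x supported on {i,j} and ∗, for non-loop e=(i,j). -/

import Mathlib

/-!
Switching at `v` with `γ` adds `γ` to the gain of a non-loop edge leaving `v`, subtracts it on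
one entering `v`, and fixes loops. For `(x, y) ∈ L_{e,ψ}` with `e = (i, j)` not a loop,
`x(j) = -x(i)` and `x` vanishes off `{i, j}`, so in every case the change
`b(x(i), ψ'(e) - ψ(e))` equals `b(x(v), γ)`. Hence the linear automorphism
`T (x, y) = (x, y + b(x(v), γ))` satisfies `L_{e,ψ'} = T⁻¹ L_{e,ψ}` for every edge (on a loop
`x = 0`, so `T` fixes `L_{e,ψ}` pointwise), and the two spans have the same dimension.
-/

/-- A directed multigraph: edges with a source and target map. -/
structure GG (V E : Type*) where
  src : E → V
  tgt : E → V

namespace GG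

variable {V E : Type*}

/-- The initial vertex of a step (an edge together with a direction). -/
def stepHead (G : GG V E) (s : E × Bool) : V := if s.2 then G.src s.1 else G.tgt s.1

/-- The final vertex of a step. -/
def stepLast (G : GG V E) (s : E × Bool) : V := if s.2 then G.tgt s.1 else G.src s.1

/-- Walks from `u` to `w` using only edges of `X`. -/
inductive IsWalkFrom (G : GG V E) (X : Set E) : V → V → List (E × Bool) → Prop
  | nil (v : V) : IsWalkFrom G X v v []
  | cons {u w : V} {s : E × Bool} {l : List (E × Bool)} (he : s.1 ∈ X)
      (h1 : G.stepHead s = u) (hl : IsWalkFrom G X (G.stepLast s) w l) :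
      IsWalkFrom G X u w (s :: l)

variable {A : Type*} [AddCommGroup A]

/-- The (additive) gain of a walk: the sum of the edge gains, negated on backward edges. -/
def addGainOf (ψ : E → A) : List (E × Bool) → A
  | [] => 0
  | s :: l => (if s.2 then ψ s.1 else -ψ s.1) + addGainOf ψ l

/-- `⟨⟨F⟩⟩`: the additive subgroup generated by the gains of all closed walks in `F`. -/
def allWalkAddGroup (G : GG V E) (ψ : E → A) (F : Set E) : AddSubgroup A :=
  AddSubgroup.closure {g : A | ∃ (v : V) (l : List (E × Bool)),
    G.IsWalkFrom F v v l ∧ addGainOf ψ l = g}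

open Classical in
/-- The (additive) switching of `ψ` at vertex `v` with `γ`. -/
noncomputable def switchAdd (G : GG V E) (ψ : E → A) (v : V) (γ : A) : E → A :=
  fun e => (if G.src e = v then γ else 0) + ψ e + (if G.tgt e = v then -γ else 0)

/-- Equivalence of additive gain functions via finite sequences of switchings. -/
def EquivalentAdd (G : GG V E) (ψ ψ' : E → A) : Prop :=
  Relation.ReflTransGen (fun a b => ∃ v γ, b = G.switchAdd a v γ) ψ ψ'

end GG

open GG

variable {𝔽 : Type*} [Field 𝔽] {d t k : ℕ}

open Classical in
/-- The canonical subspace `L_{e,ψ}` of `(𝔽^d)^V ⊕ 𝔽^k`: for a non-loop `e=(i,j)`,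
`{(x,y) : x(i)+x(j)=0, b(x(i),ψ(e))+y=0, x = 0 off {i,j}}`; for a loop,
`{(x,y) : x = 0, y ∈ {−b(α,ψ(e)) : α}}`. -/
noncomputable def Lsub {V E : Type*} (G : GG V E)
    (b : (Fin d → 𝔽) →ₗ[𝔽] (Fin t → 𝔽) →ₗ[𝔽] (Fin k → 𝔽))
    (ψ : E → (Fin t → 𝔽)) (e : E) :
    Submodule 𝔽 ((V → Fin d → 𝔽) × (Fin k → 𝔽)) :=
  if G.src e = G.tgt e then
    LinearMap.ker (LinearMap.fst 𝔽 (V → Fin d → 𝔽) (Fin k → 𝔽)) ⊓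
      Submodule.comap (LinearMap.snd 𝔽 (V → Fin d → 𝔽) (Fin k → 𝔽))
        (LinearMap.range (-(b.flip (ψ e))))
  else
    LinearMap.ker ((LinearMap.proj (R := 𝔽) (φ := fun _ : V => Fin d → 𝔽) (G.src e) +
        LinearMap.proj (G.tgt e)) ∘ₗ LinearMap.fst 𝔽 (V → Fin d → 𝔽) (Fin k → 𝔽)) ⊓
    LinearMap.ker ((b.flip (ψ e)) ∘ₗ
        (LinearMap.proj (R := 𝔽) (φ := fun _ : V => Fin d → 𝔽) (G.src e)) ∘ₗ
        LinearMap.fst 𝔽 (V → Fin d → 𝔽) (Fin k → 𝔽) +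
      LinearMap.snd 𝔽 (V → Fin d → 𝔽) (Fin k → 𝔽)) ⊓
    ⨅ v ∈ {v : V | v ≠ G.src e ∧ v ≠ G.tgt e},
      LinearMap.ker ((LinearMap.proj (R := 𝔽) (φ := fun _ : V => Fin d → 𝔽) v) ∘ₗ
        LinearMap.fst 𝔽 (V → Fin d → 𝔽) (Fin k → 𝔽))

theorem Submodule.finrank_iSup_comap_linearEquiv {ι R M N : Type*} [Ring R] [AddCommGroup M]
    [Module R M] [AddCommGroup N] [Module R N] (T : M ≃ₗ[R] N) (L : ι → Submodule R N) :
    Module.finrank R ↥(⨆ i, (L i).comap (T : M →ₗ[R] N)) = Module.finrank R ↥(⨆ i, L i) := by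
  rw [iSup_congr fun i => Submodule.comap_equiv_eq_map_symm T (L i), ← Submodule.map_iSup]
  exact LinearEquiv.finrank_map_eq _ _

namespace GG

variable {V E A : Type*} [AddCommGroup A]

theorem switchAdd_of_src_eq_tgt (G : GG V E) (ψ : E → A) (v : V) (γ : A) {e : E}
    (he : G.src e = G.tgt e) : G.switchAdd ψ v γ e = ψ e := by
  unfold switchAdd
  rw [← he]
  split_ifs <;> abel

theorem apply_switchAdd_of_src_ne_tgt {R M P : Type*} [CommSemiring R] [AddCommGroup M]
    [Module R M] [AddCommGroup P] [Module R P] [Module R A] (G : GG V E) (b : M →ₗ[R] A →ₗ[R] P)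
    (ψ : E → A) (v : V) (γ : A) {e : E} (he : G.src e ≠ G.tgt e) {x : V → M}
    (hsum : x (G.src e) + x (G.tgt e) = 0)
    (hoff : ∀ w, w ≠ G.src e → w ≠ G.tgt e → x w = 0) :
    b (x (G.src e)) (G.switchAdd ψ v γ e) = b (x (G.src e)) (ψ e) + b (x v) γ := by
  have htgt : x (G.tgt e) = -x (G.src e) := eq_neg_of_add_eq_zero_right hsum
  unfold switchAdd
  by_cases hs : G.src e = v
  · have ht : G.tgt e ≠ v := fun ht => he (hs.trans ht.symm)
    subst hs
    simp [ht, add_comm]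
  · by_cases ht : G.tgt e = v
    · subst ht
      simp [hs, htgt]
    · simp [hs, ht, hoff v (Ne.symm hs) (Ne.symm ht)]

end GG

section

variable {V E : Type*}

theorem mem_Lsub_of_src_eq_tgt (G : GG V E)
    (b : (Fin d → 𝔽) →ₗ[𝔽] (Fin t → 𝔽) →ₗ[𝔽] (Fin k → 𝔽)) (ψ : E → (Fin t → 𝔽)) {e : E}
    (he : G.src e = G.tgt e) (p : (V → Fin d → 𝔽) × (Fin k → 𝔽)) :
    p ∈ Lsub G b ψ e ↔ p.1 = 0 ∧ p.2 ∈ LinearMap.range (-(b.flip (ψ e))) := by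
  simp only [Lsub, if_pos he, Submodule.mem_inf, LinearMap.mem_ker, Submodule.mem_comap,
    LinearMap.fst_apply, LinearMap.snd_apply]

theorem mem_Lsub_of_src_ne_tgt (G : GG V E)
    (b : (Fin d → 𝔽) →ₗ[𝔽] (Fin t → 𝔽) →ₗ[𝔽] (Fin k → 𝔽)) (ψ : E → (Fin t → 𝔽)) {e : E}
    (he : G.src e ≠ G.tgt e) (p : (V → Fin d → 𝔽) × (Fin k → 𝔽)) :
    p ∈ Lsub G b ψ e ↔ (p.1 (G.src e) + p.1 (G.tgt e) = 0 ∧ b (p.1 (G.src e)) (ψ e) + p.2 = 0) ∧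
      ∀ w, w ≠ G.src e → w ≠ G.tgt e → p.1 w = 0 := by
  simp only [Lsub, if_neg he, Submodule.mem_inf, LinearMap.mem_ker, Submodule.mem_iInf,
    LinearMap.comp_apply, LinearMap.add_apply, LinearMap.fst_apply, LinearMap.snd_apply,
    LinearMap.proj_apply, LinearMap.flip_apply, Set.mem_ofPred_eq, and_imp]

noncomputable def shear (b : (Fin d → 𝔽) →ₗ[𝔽] (Fin t → 𝔽) →ₗ[𝔽] (Fin k → 𝔽)) (v : V)
    (γ : Fin t → 𝔽) : ((V → Fin d → 𝔽) × (Fin k → 𝔽)) ≃ₗ[𝔽] ((V → Fin d → 𝔽) × (Fin k → 𝔽)) :=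
  (LinearEquiv.refl 𝔽 _).skewProd (LinearEquiv.refl 𝔽 _) (b.flip γ ∘ₗ LinearMap.proj v)

theorem shear_apply (b : (Fin d → 𝔽) →ₗ[𝔽] (Fin t → 𝔽) →ₗ[𝔽] (Fin k → 𝔽)) (v : V)
    (γ : Fin t → 𝔽) (p : (V → Fin d → 𝔽) × (Fin k → 𝔽)) :
    shear b v γ p = (p.1, p.2 + b (p.1 v) γ) := rfl

theorem Lsub_switchAdd (G : GG V E) (b : (Fin d → 𝔽) →ₗ[𝔽] (Fin t → 𝔽) →ₗ[𝔽] (Fin k → 𝔽))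
    (ψ : E → (Fin t → 𝔽)) (v : V) (γ : Fin t → 𝔽) (e : E) :
    Lsub G b (G.switchAdd ψ v γ) e = (Lsub G b ψ e).comap (shear b v γ : _ →ₗ[𝔽] _) := by
  ext p
  rw [Submodule.mem_comap, LinearEquiv.coe_coe, shear_apply]
  by_cases he : G.src e = G.tgt e
  · rw [mem_Lsub_of_src_eq_tgt G b _ he, mem_Lsub_of_src_eq_tgt G b _ he,
      G.switchAdd_of_src_eq_tgt ψ v γ he]
    refine and_congr_right fun hx => ?_
    rw [hx, Pi.zero_apply, map_zero, LinearMap.zero_apply, add_zero]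
  · rw [mem_Lsub_of_src_ne_tgt G b _ he, mem_Lsub_of_src_ne_tgt G b _ he]
    refine and_congr_left fun hoff => and_congr_right fun hsum => ?_
    rw [G.apply_switchAdd_of_src_ne_tgt b ψ v γ he hsum hoff, add_assoc, add_comm (b _ γ)]

end

/-- Lemma 7.5: if `ψ'` is an additive gain function equivalent to `ψ` via switchings,
then the spans of the canonical subspaces `L_{e,ψ}` and `L_{e,ψ'}` have the same
dimension. -/
theorem dim_Lsub_equivalent {V E : Type*} (G : GG V E)
    (b : (Fin d → 𝔽) →ₗ[𝔽] (Fin t → 𝔽) →ₗ[𝔽] (Fin k → 𝔽))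
    (ψ ψ' : E → (Fin t → 𝔽)) (h : G.EquivalentAdd ψ ψ') :
    Module.finrank 𝔽 ↥(⨆ e : E, Lsub G b ψ e) =
      Module.finrank 𝔽 ↥(⨆ e : E, Lsub G b ψ' e) := by
  induction h with
  | refl => rfl
  | tail _ hswitch ih =>
    obtain ⟨v, γ, rfl⟩ := hswitch
    rw [ih, iSup_congr fun e => Lsub_switchAdd G b _ v γ e,
      Submodule.finrank_iSup_comap_linearEquiv]
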